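/- Let C be a copula with C ≥ Π and h > 0 with 0 < B_h = ∫₀¹ (log y)² h(y) dy < ∞. Write C̄(y,t) = −log C(y^{1-t},y^t), C̄_n(y,t) = −log C̃_n(y^{1-t},y^t) for another function C̃_n with values in (0,1], A*(t) the minimizer of M_h(C,·) and Â_n(t) = B_h^{-1}∫₀¹ (C̄_n(y,t)/(−log y)) h^*(y) dy with h^*(y) = (log y)² h(y). Then, assuming all integrals are finite: M_h(C̃_n, Â_n) − M_h(C, A*) = 2∫₀¹∫₀¹ (C̄_n − C̄)(y,t)(C̄(y,t) − A*(t)(−log y)) h^*(y)/(log y)² dy dt + ∫₀¹∫₀¹ (C̄_n − C̄)²(y,t) h^*(y)/(log y)² dy dt − B_h ∫₀¹ (Â_n(t) − A*(t))² dt. -/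

import Mathlib

/-! Fix `t` and write `f = log Cₙ(y^{1-t}, y^t)`, `g = log C(y^{1-t}, y^t)`, `ℓ = log y`. Pointwise,
`(f - Âℓ)² - (g - A*ℓ)² = 2 (f - g)(g - A*ℓ) + (f - g)² + (Â - A*)((Â + A*)ℓ² - 2fℓ)`,
and integrating the last term against `h` gives `-B_h (Â - A*)²`, because `Â` is the
`L²(h)`-projection coefficient of `f` on `ℓ`: `∫ f ℓ h = B_h Â`. Integrating over `t` finishes. -/

open MeasureTheory Set intervalIntegral

def IsCopula (C : ℝ → ℝ → ℝ) : Prop :=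
  (∀ u ∈ Set.Icc (0:ℝ) 1, C u 0 = 0 ∧ C u 1 = u) ∧
  (∀ v ∈ Set.Icc (0:ℝ) 1, C 0 v = 0 ∧ C 1 v = v) ∧
  (∀ u₁ u₂ v₁ v₂ : ℝ, u₁ ∈ Set.Icc (0:ℝ) 1 → u₂ ∈ Set.Icc (0:ℝ) 1 →
    v₁ ∈ Set.Icc (0:ℝ) 1 → v₂ ∈ Set.Icc (0:ℝ) 1 → u₁ ≤ u₂ → v₁ ≤ v₂ →
    0 ≤ C u₂ v₂ - C u₂ v₁ - C u₁ v₂ + C u₁ v₁)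

noncomputable def Mdist (h : ℝ → ℝ) (D : ℝ → ℝ → ℝ) (A : ℝ → ℝ) : ℝ :=
  ∫ t in (0:ℝ)..1, ∫ y in (0:ℝ)..1,
    (Real.log (D (y ^ (1 - t)) (y ^ t)) - A t * Real.log y) ^ 2 * h y

section ProjectionIdentity

variable {μ : Measure ℝ} {a b : ℝ} {f g ℓ w : ℝ → ℝ} {α β : ℝ}

theorem integral_projection_remainder
    (hℓ : IntervalIntegrable (fun x => ℓ x ^ 2 * w x) μ a b)
    (hr : IntervalIntegrable
      (fun x => (α - β) * ((α + β) * (ℓ x ^ 2 * w x) - 2 * (f x * ℓ x * w x))) μ a b)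
    (hproj : ∫ x in a..b, f x * ℓ x * w x ∂μ = (∫ x in a..b, ℓ x ^ 2 * w x ∂μ) * α) :
    ∫ x in a..b, (α - β) * ((α + β) * (ℓ x ^ 2 * w x) - 2 * (f x * ℓ x * w x)) ∂μ
      = -((∫ x in a..b, ℓ x ^ 2 * w x ∂μ) * (α - β) ^ 2) := by
  rcases eq_or_ne α β with rfl | hne
  · simp
  have hfℓ : IntervalIntegrable (fun x => f x * ℓ x * w x) μ a b := by
    convert ((hℓ.const_mul (α + β)).sub (hr.const_mul (α - β)⁻¹)).const_mul (1 / 2) using 1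
    funext x
    field_simp [sub_ne_zero.mpr hne]
    ring
  rw [intervalIntegral.integral_const_mul, integral_sub (hℓ.const_mul _) (hfℓ.const_mul _),
    intervalIntegral.integral_const_mul, intervalIntegral.integral_const_mul, hproj]
  ring

theorem integral_sq_sub_mul_sub_integral_sq_sub_mul
    (hf : IntervalIntegrable (fun x => (f x - α * ℓ x) ^ 2 * w x) μ a b)
    (hg : IntervalIntegrable (fun x => (g x - β * ℓ x) ^ 2 * w x) μ a b)
    (hcross : IntervalIntegrable (fun x => (f x - g x) * (g x - β * ℓ x) * w x) μ a b)
    (hdiff : IntervalIntegrable (fun x => (f x - g x) ^ 2 * w x) μ a b)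
    (hℓ : IntervalIntegrable (fun x => ℓ x ^ 2 * w x) μ a b)
    (hproj : ∫ x in a..b, f x * ℓ x * w x ∂μ = (∫ x in a..b, ℓ x ^ 2 * w x ∂μ) * α) :
    (∫ x in a..b, (f x - α * ℓ x) ^ 2 * w x ∂μ) - ∫ x in a..b, (g x - β * ℓ x) ^ 2 * w x ∂μ
      = 2 * (∫ x in a..b, (f x - g x) * (g x - β * ℓ x) * w x ∂μ)
        + (∫ x in a..b, (f x - g x) ^ 2 * w x ∂μ)
        - (∫ x in a..b, ℓ x ^ 2 * w x ∂μ) * (α - β) ^ 2 := by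
  have hcross_diff := (hcross.const_mul 2).add hdiff
  have hr : IntervalIntegrable
      (fun x => (α - β) * ((α + β) * (ℓ x ^ 2 * w x) - 2 * (f x * ℓ x * w x))) μ a b := by
    convert (hf.sub hg).sub hcross_diff using 1
    funext x
    ring
  calc (∫ x in a..b, (f x - α * ℓ x) ^ 2 * w x ∂μ) - ∫ x in a..b, (g x - β * ℓ x) ^ 2 * w x ∂μ
      = ∫ x in a..b, (2 * ((f x - g x) * (g x - β * ℓ x) * w x) + (f x - g x) ^ 2 * w x)
          + (α - β) * ((α + β) * (ℓ x ^ 2 * w x) - 2 * (f x * ℓ x * w x)) ∂μ := by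
        rw [← integral_sub hf hg]
        exact integral_congr fun x _ => by ring
    _ = _ := by
        rw [integral_add hcross_diff hr, integral_add (hcross.const_mul 2) hdiff,
          intervalIntegral.integral_const_mul, integral_projection_remainder hℓ hr hproj]
        ring

end ProjectionIdentity

theorem ae_log_ne_zero (μ : Measure ℝ) [NullSingletonClass μ] : ∀ᵐ y ∂μ, Real.log y ≠ 0 := by
  rw [ae_iff]
  refine measure_mono_null (fun y hy => ?_) ((toFinite ({0, 1, -1} : Set ℝ)).measure_zero μ)
  exact Real.log_eq_zero.mp (not_not.mp hy)

-- The right side is written through `-f`, `-g` and `hstar / log²` (equal to `h` off the null set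
-- `log y = 0`) so that it matches the log-copula form `C̄ = -log C` of the theorem verbatim.
theorem integral_sq_sub_mul_log_sub_integral_sq_sub_mul_log
    {μ : Measure ℝ} [NullSingletonClass μ] {a b : ℝ} {f g h hstar : ℝ → ℝ}
    (hhstar : ∀ y, hstar y = Real.log y ^ 2 * h y) {B α β : ℝ}
    (hB : B = ∫ y in a..b, Real.log y ^ 2 * h y ∂μ) (hB0 : B ≠ 0)
    (hℓ : IntervalIntegrable (fun y => Real.log y ^ 2 * h y) μ a b)
    (hα : α = B⁻¹ * ∫ y in a..b, (-f y / -Real.log y) * hstar y ∂μ)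
    (hf : IntervalIntegrable (fun y => (f y - α * Real.log y) ^ 2 * h y) μ a b)
    (hg : IntervalIntegrable (fun y => (g y - β * Real.log y) ^ 2 * h y) μ a b)
    (hcross : IntervalIntegrable (fun y => (-f y - -g y) * (-g y - β * -Real.log y) *
      (hstar y / Real.log y ^ 2)) μ a b)
    (hdiff : IntervalIntegrable (fun y => (-f y - -g y) ^ 2 * (hstar y / Real.log y ^ 2)) μ a b) :
    (∫ y in a..b, (f y - α * Real.log y) ^ 2 * h y ∂μ)
        - ∫ y in a..b, (g y - β * Real.log y) ^ 2 * h y ∂μ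
      = 2 * (∫ y in a..b, (-f y - -g y) * (-g y - β * -Real.log y) *
          (hstar y / Real.log y ^ 2) ∂μ)
        + (∫ y in a..b, (-f y - -g y) ^ 2 * (hstar y / Real.log y ^ 2) ∂μ)
        - B * (α - β) ^ 2 := by
  have hw : ∀ᵐ y ∂μ, hstar y / Real.log y ^ 2 = h y := by
    filter_upwards [ae_log_ne_zero μ] with y hy
    rw [hhstar]
    field_simp
  have hcross_eq : (fun y => (-f y - -g y) * (-g y - β * -Real.log y) *
      (hstar y / Real.log y ^ 2))
      =ᵐ[μ] fun y => (f y - g y) * (g y - β * Real.log y) * h y := by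
    filter_upwards [hw] with y hy
    rw [hy]
    ring
  have hdiff_eq : (fun y => (-f y - -g y) ^ 2 * (hstar y / Real.log y ^ 2))
      =ᵐ[μ] fun y => (f y - g y) ^ 2 * h y := by
    filter_upwards [hw] with y hy
    rw [hy]
    ring
  have hproj : ∫ y in a..b, f y * Real.log y * h y ∂μ
      = (∫ y in a..b, Real.log y ^ 2 * h y ∂μ) * α := by
    rw [← hB, hα, mul_inv_cancel_left₀ hB0]
    refine integral_congr_ae ?_
    filter_upwards [ae_log_ne_zero μ] with y hy _
    rw [hhstar]
    field_simp
  rw [integral_congr_ae (hcross_eq.mono fun y hy _ => hy),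
    integral_congr_ae (hdiff_eq.mono fun y hy _ => hy), hB]
  exact integral_sq_sub_mul_sub_integral_sq_sub_mul hf hg
    (hcross.congr_ae (ae_restrict_of_ae hcross_eq)) (hdiff.congr_ae (ae_restrict_of_ae hdiff_eq))
    hℓ hproj

theorem stmt18_general (C : ℝ → ℝ → ℝ)
    (h : ℝ → ℝ)
    (hstar : ℝ → ℝ) (hhstar : ∀ y, hstar y = (Real.log y) ^ 2 * h y)
    (Bh : ℝ) (hBh : Bh = ∫ y in (0:ℝ)..1, (Real.log y) ^ 2 * h y) (hBpos : 0 < Bh)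
    (hBfin : IntervalIntegrable (fun y => (Real.log y) ^ 2 * h y) volume 0 1)
    (Cn : ℝ → ℝ → ℝ)
    -- the "log-copula" functions and the two projections
    (Cb Cbn : ℝ → ℝ → ℝ)
    (hCb : ∀ y t, Cb y t = -Real.log (C (y ^ (1 - t)) (y ^ t)))
    (hCbn : ∀ y t, Cbn y t = -Real.log (Cn (y ^ (1 - t)) (y ^ t)))
    (Astar Ahat : ℝ → ℝ)
    (hAhat : ∀ t, Ahat t =
      Bh⁻¹ * ∫ y in (0:ℝ)..1, (Cbn y t / (-Real.log y)) * hstar y)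
    -- all integrals involved are assumed to be finite
    (hint1 : ∀ t ∈ Set.Icc (0:ℝ) 1, IntervalIntegrable
      (fun y => (Real.log (Cn (y ^ (1 - t)) (y ^ t)) - Ahat t * Real.log y) ^ 2 * h y)
      volume 0 1)
    (hint2 : ∀ t ∈ Set.Icc (0:ℝ) 1, IntervalIntegrable
      (fun y => (Real.log (C (y ^ (1 - t)) (y ^ t)) - Astar t * Real.log y) ^ 2 * h y)
      volume 0 1)
    (hint3 : ∀ t ∈ Set.Icc (0:ℝ) 1, IntervalIntegrable
      (fun y => (Cbn y t - Cb y t) * (Cb y t - Astar t * (-Real.log y)) *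
        (hstar y / (Real.log y) ^ 2)) volume 0 1)
    (hint4 : ∀ t ∈ Set.Icc (0:ℝ) 1, IntervalIntegrable
      (fun y => (Cbn y t - Cb y t) ^ 2 * (hstar y / (Real.log y) ^ 2)) volume 0 1)
    (hint5 : IntervalIntegrable (fun t =>
      ∫ y in (0:ℝ)..1, (Real.log (Cn (y ^ (1 - t)) (y ^ t)) - Ahat t * Real.log y) ^ 2 * h y)
      volume 0 1)
    (hint6 : IntervalIntegrable (fun t =>
      ∫ y in (0:ℝ)..1, (Real.log (C (y ^ (1 - t)) (y ^ t)) - Astar t * Real.log y) ^ 2 * h y)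
      volume 0 1)
    (hint7 : IntervalIntegrable (fun t =>
      ∫ y in (0:ℝ)..1, (Cbn y t - Cb y t) * (Cb y t - Astar t * (-Real.log y)) *
        (hstar y / (Real.log y) ^ 2)) volume 0 1)
    (hint8 : IntervalIntegrable (fun t =>
      ∫ y in (0:ℝ)..1, (Cbn y t - Cb y t) ^ 2 * (hstar y / (Real.log y) ^ 2)) volume 0 1)
    (hint9 : IntervalIntegrable (fun t => (Ahat t - Astar t) ^ 2) volume 0 1) :
    Mdist h Cn Ahat - Mdist h C Astar =
      2 * (∫ t in (0:ℝ)..1, ∫ y in (0:ℝ)..1,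
        (Cbn y t - Cb y t) * (Cb y t - Astar t * (-Real.log y)) *
          (hstar y / (Real.log y) ^ 2))
      + (∫ t in (0:ℝ)..1, ∫ y in (0:ℝ)..1,
          (Cbn y t - Cb y t) ^ 2 * (hstar y / (Real.log y) ^ 2))
      - Bh * ∫ t in (0:ℝ)..1, (Ahat t - Astar t) ^ 2 := by
  simp only [hCb, hCbn] at hAhat hint3 hint4 hint7 hint8 ⊢
  unfold Mdist
  rw [← integral_sub hint5 hint6, ← intervalIntegral.integral_const_mul,
    ← intervalIntegral.integral_const_mul, ← integral_add (hint7.const_mul 2) hint8,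
    ← integral_sub ((hint7.const_mul 2).add hint8) (hint9.const_mul Bh)]
  refine integral_congr fun t ht => ?_
  rw [uIcc_of_le zero_le_one] at ht
  exact integral_sq_sub_mul_log_sub_integral_sq_sub_mul_log hhstar hBh hBpos.ne' hBfin (hAhat t)
    (hint1 t ht) (hint2 t ht) (hint3 t ht) (hint4 t ht)

theorem stmt18 (C : ℝ → ℝ → ℝ) (hC : IsCopula C)
    (hPi : ∀ u ∈ Set.Icc (0:ℝ) 1, ∀ v ∈ Set.Icc (0:ℝ) 1, u * v ≤ C u v)
    (h : ℝ → ℝ) (hpos : ∀ y ∈ Set.Ioo (0:ℝ) 1, 0 < h y)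
    (hstar : ℝ → ℝ) (hhstar : ∀ y, hstar y = (Real.log y) ^ 2 * h y)
    (Bh : ℝ) (hBh : Bh = ∫ y in (0:ℝ)..1, (Real.log y) ^ 2 * h y) (hBpos : 0 < Bh)
    (hBfin : IntervalIntegrable (fun y => (Real.log y) ^ 2 * h y) volume 0 1)
    (Cn : ℝ → ℝ → ℝ)
    (hCn : ∀ u ∈ Set.Icc (0:ℝ) 1, ∀ v ∈ Set.Icc (0:ℝ) 1, Cn u v ∈ Set.Ioc (0:ℝ) 1)
    -- the "log-copula" functions and the two projections
    (Cb Cbn : ℝ → ℝ → ℝ)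
    (hCb : ∀ y t, Cb y t = -Real.log (C (y ^ (1 - t)) (y ^ t)))
    (hCbn : ∀ y t, Cbn y t = -Real.log (Cn (y ^ (1 - t)) (y ^ t)))
    (Astar Ahat : ℝ → ℝ)
    (hAstar : ∀ t, Astar t =
      Bh⁻¹ * ∫ y in (0:ℝ)..1, (Cb y t / (-Real.log y)) * hstar y)
    (hAhat : ∀ t, Ahat t =
      Bh⁻¹ * ∫ y in (0:ℝ)..1, (Cbn y t / (-Real.log y)) * hstar y)
    -- all integrals involved are assumed to be finite
    (hint1 : ∀ t ∈ Set.Icc (0:ℝ) 1, IntervalIntegrable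
      (fun y => (Real.log (Cn (y ^ (1 - t)) (y ^ t)) - Ahat t * Real.log y) ^ 2 * h y)
      volume 0 1)
    (hint2 : ∀ t ∈ Set.Icc (0:ℝ) 1, IntervalIntegrable
      (fun y => (Real.log (C (y ^ (1 - t)) (y ^ t)) - Astar t * Real.log y) ^ 2 * h y)
      volume 0 1)
    (hint3 : ∀ t ∈ Set.Icc (0:ℝ) 1, IntervalIntegrable
      (fun y => (Cbn y t - Cb y t) * (Cb y t - Astar t * (-Real.log y)) *
        (hstar y / (Real.log y) ^ 2)) volume 0 1)
    (hint4 : ∀ t ∈ Set.Icc (0:ℝ) 1, IntervalIntegrable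
      (fun y => (Cbn y t - Cb y t) ^ 2 * (hstar y / (Real.log y) ^ 2)) volume 0 1)
    (hint5 : IntervalIntegrable (fun t =>
      ∫ y in (0:ℝ)..1, (Real.log (Cn (y ^ (1 - t)) (y ^ t)) - Ahat t * Real.log y) ^ 2 * h y)
      volume 0 1)
    (hint6 : IntervalIntegrable (fun t =>
      ∫ y in (0:ℝ)..1, (Real.log (C (y ^ (1 - t)) (y ^ t)) - Astar t * Real.log y) ^ 2 * h y)
      volume 0 1)
    (hint7 : IntervalIntegrable (fun t =>
      ∫ y in (0:ℝ)..1, (Cbn y t - Cb y t) * (Cb y t - Astar t * (-Real.log y)) *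
        (hstar y / (Real.log y) ^ 2)) volume 0 1)
    (hint8 : IntervalIntegrable (fun t =>
      ∫ y in (0:ℝ)..1, (Cbn y t - Cb y t) ^ 2 * (hstar y / (Real.log y) ^ 2)) volume 0 1)
    (hint9 : IntervalIntegrable (fun t => (Ahat t - Astar t) ^ 2) volume 0 1) :
    Mdist h Cn Ahat - Mdist h C Astar =
      2 * (∫ t in (0:ℝ)..1, ∫ y in (0:ℝ)..1,
        (Cbn y t - Cb y t) * (Cb y t - Astar t * (-Real.log y)) *
          (hstar y / (Real.log y) ^ 2))
      + (∫ t in (0:ℝ)..1, ∫ y in (0:ℝ)..1,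
          (Cbn y t - Cb y t) ^ 2 * (hstar y / (Real.log y) ^ 2))
      - Bh * ∫ t in (0:ℝ)..1, (Ahat t - Astar t) ^ 2 :=
  stmt18_general C h hstar hhstar Bh hBh hBpos hBfin Cn Cb Cbn hCb hCbn Astar Ahat hAhat hint1 hint2
    hint3 hint4 hint5 hint6 hint7 hint8 hint9
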